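/- arXiv:1406.6020 — 2 statements merged into one kernel-verified Lean document; each statement's English description precedes it below -/
import Mathlib

section
/- Let m, b ∈ ℕ, s = m + b, let (X_t) be a stationary φ-mixing process taking values in ℝ with mixing coefficients φ_X, and let ψ : ℝ^m → ℝ be a measurable function. Then the stochastic process Z_t = ψ(X_{st+1},…,X_{st+m}) is a φ-mixing process whose mixing coefficients satisfy φ_Z(t) ≤ φ_X(b t + m(t−1)) for every t ≥ 1. -/
open MeasureTheory Filter Finset

/-- A sequence of random variables is stationary if every finite window of consecutive
variables has the same distribution as any of its time-shifts. -/
def IsStationarySeq {Ω U : Type*} [MeasurableSpace Ω] [MeasurableSpace U]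
    (P : Measure Ω) (X : ℕ → Ω → U) : Prop :=
  ∀ t m s : ℕ,
    P.map (fun ω => fun i : Fin (m + 1) => X (t + i.val) ω) =
      P.map (fun ω => fun i : Fin (m + 1) => X (t + s + i.val) ω)

/-- The sigma-algebra generated by the random variables `X r`, `r ≥ n`. -/
def sigmaAfter {Ω U : Type*} [MeasurableSpace U] (X : ℕ → Ω → U) (n : ℕ) :
    MeasurableSpace Ω :=
  ⨆ r ∈ Set.Ici n, MeasurableSpace.comap (X r) inferInstance

/-- The sigma-algebra generated by the random variables `X r`, `r ≤ n`. -/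
def sigmaUpTo {Ω U : Type*} [MeasurableSpace U] (X : ℕ → Ω → U) (n : ℕ) :
    MeasurableSpace Ω :=
  ⨆ r ∈ Set.Iic n, MeasurableSpace.comap (X r) inferInstance

/-- The φ-mixing coefficient of the process `X` :
`φ(n) = sup |P(A|B) - P(A)|`, the supremum running over all `t`, all events `A` in the
σ-algebra generated by `(X r : r ≥ t + n)` and all events `B` of positive probability in the
σ-algebra generated by `(X r : r ≤ t)`. -/
noncomputable def phiMixCoeff {Ω U : Type*} [MeasurableSpace Ω] [MeasurableSpace U]
    (P : Measure Ω) (X : ℕ → Ω → U) (n : ℕ) : ℝ :=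
  sSup {x : ℝ | ∃ t : ℕ, ∃ A B : Set Ω,
    MeasurableSet[sigmaAfter X (t + n)] A ∧ MeasurableSet[sigmaUpTo X t] B ∧
    0 < P B ∧ x = |(P (A ∩ B)).toReal / (P B).toReal - (P A).toReal|}

/-- `X` is a φ-mixing process: its mixing coefficients tend to `0`. -/
def IsPhiMixing {Ω U : Type*} [MeasurableSpace Ω] [MeasurableSpace U]
    (P : Measure Ω) (X : ℕ → Ω → U) : Prop :=
  Tendsto (phiMixCoeff P X) atTop (nhds 0)

/-- The Hamming distance: the number of coordinates at which `x` and `y` differ. -/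
noncomputable def hammingDist' {U : Type*} {m : ℕ} (x y : Fin m → U) : ℕ :=
  Nat.card {i : Fin m // x i ≠ y i}

/-- `ψ` is `l`-Lipschitz with respect to the Hamming metric: `|ψ x - ψ y|` is at most `l`
times the number of coordinates at which `x` and `y` differ. -/
def HammingLipschitzWith {U : Type*} {m : ℕ} (l : ℝ) (ψ : (Fin m → U) → ℝ) : Prop :=
  ∀ x y : Fin m → U, |ψ x - ψ y| ≤ l * (hammingDist' x y : ℝ)

/-!
A block `Z_r` is a measurable function of `X_{sr+1}, …, X_{sr+m}`, so the past of `Z` up to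
time `t` lies in the past of `X` up to time `st + m`, and the future of `Z` from time `t + n`
lies in the future of `X` from time `s(t + n) + 1 = (st + m) + (bn + m(n - 1)) + 1`.
Every pair of events competing in the supremum defining `φ_Z(n)` therefore also competes in the
one defining `φ_X(bn + m(n - 1))`. When `m = 0` the process `Z` is constant and `φ_Z = 0`;
otherwise `bn + m(n - 1) → ∞` and `φ_Z → 0` by squeezing.
-/

section SigmaAlgebras

variable {Ω U : Type*} [MeasurableSpace U]

lemma sigmaAfter_anti (X : ℕ → Ω → U) {a c : ℕ} (h : c ≤ a) :
    sigmaAfter X a ≤ sigmaAfter X c :=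
  iSup₂_le fun r hr => le_iSup₂_of_le r (h.trans hr) le_rfl

lemma comap_le_sigmaAfter (X : ℕ → Ω → U) {a j : ℕ} (h : a ≤ j) :
    MeasurableSpace.comap (X j) inferInstance ≤ sigmaAfter X a :=
  le_iSup₂_of_le j h le_rfl

lemma comap_le_sigmaUpTo (X : ℕ → Ω → U) {a j : ℕ} (h : j ≤ a) :
    MeasurableSpace.comap (X j) inferInstance ≤ sigmaUpTo X a :=
  le_iSup₂_of_le j h le_rfl

lemma comap_comp_pi_le {ι V : Type*} [MeasurableSpace V] {ψ : (ι → U) → V}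
    (hψ : Measurable ψ) (X : ι → Ω → U) :
    MeasurableSpace.comap (fun ω => ψ fun i => X i ω) inferInstance ≤
      ⨆ i, MeasurableSpace.comap (X i) inferInstance := by
  let _ : MeasurableSpace Ω := ⨆ i, MeasurableSpace.comap (X i) inferInstance
  have hX : Measurable fun ω i => X i ω :=
    measurable_pi_lambda _ fun i => Measurable.of_comap_le (le_iSup_of_le i le_rfl)
  exact (hψ.comp hX).comap_le

variable {V : Type*} [MeasurableSpace V] {m s : ℕ} {ψ : (Fin m → U) → V}
  {X : ℕ → Ω → U} {Z : ℕ → Ω → V}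

lemma sigmaAfter_blockFactor_le (hψ : Measurable ψ)
    (hZ : ∀ t ω, Z t ω = ψ fun i => X (s * t + 1 + i.val) ω) (k : ℕ) :
    sigmaAfter Z k ≤ sigmaAfter X (s * k + 1) := by
  refine iSup₂_le fun r (hr : k ≤ r) => ?_
  rw [show Z r = fun ω => ψ fun i => X (s * r + 1 + i.val) ω from funext (hZ r)]
  refine (comap_comp_pi_le hψ _).trans (iSup_le fun i => comap_le_sigmaAfter X ?_)
  have := Nat.mul_le_mul_left s hr
  omega

lemma sigmaUpTo_blockFactor_le (hψ : Measurable ψ)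
    (hZ : ∀ t ω, Z t ω = ψ fun i => X (s * t + 1 + i.val) ω) (k : ℕ) :
    sigmaUpTo Z k ≤ sigmaUpTo X (s * k + m) := by
  refine iSup₂_le fun r (hr : r ≤ k) => ?_
  rw [show Z r = fun ω => ψ fun i => X (s * r + 1 + i.val) ω from funext (hZ r)]
  refine (comap_comp_pi_le hψ _).trans (iSup_le fun i => comap_le_sigmaUpTo X ?_)
  have := Nat.mul_le_mul_left s hr
  have := i.isLt
  omega

end SigmaAlgebras

section MixingCoefficients

variable {Ω U V : Type*} [MeasurableSpace Ω] [MeasurableSpace U] [MeasurableSpace V]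
  (P : Measure Ω) [IsProbabilityMeasure P]

def phiMixSet (X : ℕ → Ω → U) (n : ℕ) : Set ℝ :=
  {x : ℝ | ∃ t : ℕ, ∃ A B : Set Ω,
    MeasurableSet[sigmaAfter X (t + n)] A ∧ MeasurableSet[sigmaUpTo X t] B ∧
    0 < P B ∧ x = |(P (A ∩ B)).toReal / (P B).toReal - (P A).toReal|}

lemma bddAbove_phiMixSet (X : ℕ → Ω → U) (n : ℕ) : BddAbove (phiMixSet P X n) := by
  refine ⟨1, ?_⟩
  rintro x ⟨t, A, B, -, -, -, rfl⟩
  simp only [← measureReal_def]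
  refine abs_sub_le_of_nonneg_of_le (by positivity) ?_ measureReal_nonneg measureReal_le_one
  exact div_le_one_of_le₀ (measureReal_mono Set.inter_subset_right) measureReal_nonneg

lemma zero_mem_phiMixSet (X : ℕ → Ω → U) (n : ℕ) : (0 : ℝ) ∈ phiMixSet P X n :=
  ⟨0, ∅, Set.univ, @MeasurableSet.empty _ (sigmaAfter X (0 + n)),
    @MeasurableSet.univ _ (sigmaUpTo X 0), by simp, by simp⟩

lemma phiMixCoeff_nonneg (X : ℕ → Ω → U) (n : ℕ) : 0 ≤ phiMixCoeff P X n :=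
  le_csSup (bddAbove_phiMixSet P X n) (zero_mem_phiMixSet P X n)

lemma phiMixCoeff_le_of_le {X : ℕ → Ω → U} {Z : ℕ → Ω → V} {n n' : ℕ} (τ : ℕ → ℕ)
    (hUpTo : ∀ t, sigmaUpTo Z t ≤ sigmaUpTo X (τ t))
    (hAfter : ∀ t, sigmaAfter Z (t + n) ≤ sigmaAfter X (τ t + n')) :
    phiMixCoeff P Z n ≤ phiMixCoeff P X n' := by
  refine csSup_le_csSup (bddAbove_phiMixSet P X n') ⟨0, zero_mem_phiMixSet P Z n⟩ ?_
  rintro x ⟨t, A, B, hA, hB, hPB, rfl⟩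
  exact ⟨τ t, A, B, hAfter t A hA, hUpTo t B hB, hPB, rfl⟩

lemma phiMixCoeff_const (c : U) (n : ℕ) : phiMixCoeff P (fun _ _ => c : ℕ → Ω → U) n = 0 := by
  refine le_antisymm (csSup_le ⟨0, zero_mem_phiMixSet P _ n⟩ ?_) (phiMixCoeff_nonneg P _ n)
  rintro x ⟨t, A, B, hA, -, hPB, rfl⟩
  have hbot : sigmaAfter (fun _ _ => c : ℕ → Ω → U) (t + n) = ⊥ :=
    le_bot_iff.mp <| iSup₂_le fun _ _ => (MeasurableSpace.comap_const c).le
  rw [hbot, MeasurableSpace.measurableSet_bot_iff] at hA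
  rcases hA with rfl | rfl
  · simp
  · have hPB' : (P B).toReal ≠ 0 := (ENNReal.toReal_pos hPB.ne' (measure_ne_top P B)).ne'
    simp [hPB']

end MixingCoefficients

lemma tendsto_blockGap {m : ℕ} (hm : 0 < m) (b : ℕ) :
    Tendsto (fun n => b * n + m * (n - 1)) atTop atTop := by
  refine tendsto_atTop_mono (fun n => ?_) (tendsto_sub_atTop_nat 1)
  nlinarith [Nat.zero_le (b * n)]

theorem block_factor_phi_mixing_general
    {Ω : Type*} [MeasurableSpace Ω] (P : Measure Ω) [IsProbabilityMeasure P]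
    (m b : ℕ) (s : ℕ) (hs : s = m + b)
    (X : ℕ → Ω → ℝ)
    (φX : ℕ → ℝ) (hφX : ∀ n, φX n = phiMixCoeff P X n)
    (hmixing : Tendsto φX atTop (nhds 0))
    (ψ : (Fin m → ℝ) → ℝ) (hψmeas : Measurable ψ)
    (Z : ℕ → Ω → ℝ) (hZ : ∀ t ω, Z t ω = ψ (fun i => X (s * t + 1 + i.val) ω)) :
    IsPhiMixing P Z ∧ ∀ t : ℕ, 1 ≤ t → phiMixCoeff P Z t ≤ φX (b * t + m * (t - 1)) := by
  have hbound : ∀ n, 1 ≤ n → phiMixCoeff P Z n ≤ φX (b * n + m * (n - 1)) := by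
    intro n hn
    rw [hφX]
    refine phiMixCoeff_le_of_le P (fun t => s * t + m)
      (sigmaUpTo_blockFactor_le hψmeas hZ) fun t => ?_
    refine (sigmaAfter_blockFactor_le hψmeas hZ (t + n)).trans (sigmaAfter_anti X ?_)
    obtain ⟨k, rfl⟩ := Nat.exists_eq_add_of_le' hn
    subst hs
    simp only [Nat.add_sub_cancel]
    nlinarith
  refine ⟨?_, hbound⟩
  rcases Nat.eq_zero_or_pos m with rfl | hm
  · have hZconst : Z = fun _ _ => ψ Fin.elim0 :=
      funext₂ fun t ω => (hZ t ω).trans (congrArg ψ (Subsingleton.elim _ _))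
    have hzero : phiMixCoeff P Z = fun _ => 0 :=
      funext fun n => hZconst ▸ phiMixCoeff_const P (ψ Fin.elim0) n
    rw [IsPhiMixing, hzero]
    exact tendsto_const_nhds
  · exact squeeze_zero' (Eventually.of_forall (phiMixCoeff_nonneg P Z))
      ((eventually_ge_atTop 1).mono hbound) (hmixing.comp (tendsto_blockGap hm b))

/-- **Mixing coefficients of a block factor process** (Proposition 6).
If `(X_t)` is a stationary real-valued φ-mixing process with mixing coefficients `φ_X`,
`s = m + b` and `ψ : ℝ^m → ℝ` is measurable, then `Z_t = ψ(X_{st+1},…,X_{st+m})` is a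
φ-mixing process whose mixing coefficients satisfy `φ_Z(t) ≤ φ_X(bt + m(t−1))` for `t ≥ 1`. -/
theorem block_factor_phi_mixing
    {Ω : Type*} [MeasurableSpace Ω] (P : Measure Ω) [IsProbabilityMeasure P]
    (m b : ℕ) (s : ℕ) (hs : s = m + b)
    (X : ℕ → Ω → ℝ) (hXmeas : ∀ t, Measurable (X t))
    (hstat : IsStationarySeq P X)
    (φX : ℕ → ℝ) (hφX : ∀ n, φX n = phiMixCoeff P X n)
    (hmixing : Tendsto φX atTop (nhds 0))
    (ψ : (Fin m → ℝ) → ℝ) (hψmeas : Measurable ψ)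
    (Z : ℕ → Ω → ℝ) (hZ : ∀ t ω, Z t ω = ψ (fun i => X (s * t + 1 + i.val) ω)) :
    IsPhiMixing P Z ∧ ∀ t : ℕ, 1 ≤ t → phiMixCoeff P Z t ≤ φX (b * t + m * (t - 1)) :=
  block_factor_phi_mixing_general P m b s hs X φX hφX hmixing ψ hψmeas Z hZ
end

section
/- Let θ_*, θ_i : (0,∞) → (0,∞) and γ_*, γ_i : (0,∞) → (0,∞) be increasing bijections, let α > 0, let t and τ be reals with e ≤ t ≤ τ (so that 0 < log t ≤ log τ), let μ*, μ_i be reals with Δ_i = μ* − μ_i > 0, let τ*, τ_i > 0, and let μ̂*, μ̂_i be reals. Assume: (i) μ̂* ≥ μ* − γ_*^{−1}(α log t / θ_*(τ*)); (ii) μ_i > μ̂_i − γ_i^{−1}(α log t / θ_i(τ_i)); (iii) τ_i > θ_i^{−1}(α log τ / γ_i(Δ_i/2)). Then μ̂* + γ_*^{−1}(α log t / θ_*(τ*)) > μ̂_i + γ_i^{−1}(α log t / θ_i(τ_i)); in particular, an arm i satisfying (i)–(iii) cannot be selected by the (α, θ, γ)-UCB index rule in place of the optimal arm. -/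
/-- **The UCB index comparison step.**
With increasing bijections `θ_*, θ_i, γ_*, γ_i` of `(0,∞)`, `α > 0`, `e ≤ t ≤ τ`,
`Δ_i = μ* − μ_i > 0`, `τ*, τ_i > 0`, and the three events
(i) `μ̂* ≥ μ* − γ_*⁻¹(α log t / θ_*(τ*))`,
(ii) `μ_i > μ̂_i − γ_i⁻¹(α log t / θ_i(τ_i))`,
(iii) `τ_i > θ_i⁻¹(α log τ / γ_i(Δ_i/2))`, one has
`μ̂* + γ_*⁻¹(α log t / θ_*(τ*)) > μ̂_i + γ_i⁻¹(α log t / θ_i(τ_i))`; in particular such an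
arm `i` cannot be selected by the `(α,θ,γ)`-UCB index rule in place of the optimal arm. -/
theorem UCB_index_comparison
    (θs θi γs γi θsInv θiInv γsInv γiInv : ℝ → ℝ)
    (hθsmono : StrictMonoOn θs (Set.Ioi 0)) (hθimono : StrictMonoOn θi (Set.Ioi 0))
    (hγsmono : StrictMonoOn γs (Set.Ioi 0)) (hγimono : StrictMonoOn γi (Set.Ioi 0))
    (hθs : Set.BijOn θs (Set.Ioi 0) (Set.Ioi 0)) (hθi : Set.BijOn θi (Set.Ioi 0) (Set.Ioi 0))
    (hγs : Set.BijOn γs (Set.Ioi 0) (Set.Ioi 0)) (hγi : Set.BijOn γi (Set.Ioi 0) (Set.Ioi 0))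
    (hθsInv : ∀ x : ℝ, 0 < x → θsInv (θs x) = x ∧ θs (θsInv x) = x ∧ 0 < θsInv x)
    (hθiInv : ∀ x : ℝ, 0 < x → θiInv (θi x) = x ∧ θi (θiInv x) = x ∧ 0 < θiInv x)
    (hγsInv : ∀ x : ℝ, 0 < x → γsInv (γs x) = x ∧ γs (γsInv x) = x ∧ 0 < γsInv x)
    (hγiInv : ∀ x : ℝ, 0 < x → γiInv (γi x) = x ∧ γi (γiInv x) = x ∧ 0 < γiInv x)
    (α : ℝ) (hα : 0 < α)
    (t τ : ℝ) (ht : Real.exp 1 ≤ t) (htτ : t ≤ τ)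
    (μstar μi : ℝ) (hΔ : 0 < μstar - μi)
    (τstar τi : ℝ) (hτstar : 0 < τstar) (hτi : 0 < τi)
    (μhatstar μhati : ℝ)
    (h1 : μhatstar ≥ μstar - γsInv (α * Real.log t / θs τstar))
    (h2 : μi > μhati - γiInv (α * Real.log t / θi τi))
    (h3 : τi > θiInv (α * Real.log τ / γi ((μstar - μi) / 2))) :
    μhatstar + γsInv (α * Real.log t / θs τstar) >
      μhati + γiInv (α * Real.log t / θi τi) := by
  have ht0 : (0:ℝ) < t := lt_of_lt_of_le (Real.exp_pos 1) ht
  have hlogt1 : (1:ℝ) ≤ Real.log t := (Real.le_log_iff_exp_le ht0).mpr ht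
  have hlogt : 0 < Real.log t := lt_of_lt_of_le one_pos hlogt1
  have hlogle : Real.log t ≤ Real.log τ := Real.log_le_log ht0 htτ
  have hlogτ : 0 < Real.log τ := lt_of_lt_of_le hlogt hlogle
  have hθiτi : 0 < θi τi := hθi.mapsTo hτi
  have hΔ2 : 0 < (μstar - μi) / 2 := by linarith
  have hγiΔ : 0 < γi ((μstar - μi) / 2) := hγi.mapsTo hΔ2
  have hy : 0 < α * Real.log τ / γi ((μstar - μi) / 2) :=
    div_pos (mul_pos hα hlogτ) hγiΔ
  obtain ⟨_, hy2, hy3⟩ := hθiInv _ hy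
  have hθiτi_gt : α * Real.log τ / γi ((μstar - μi) / 2) < θi τi := by
    have := hθimono (Set.mem_Ioi.mpr hy3) (Set.mem_Ioi.mpr hτi) h3
    rwa [hy2] at this
  have hxlt : α * Real.log t / θi τi < γi ((μstar - μi) / 2) := by
    rw [div_lt_iff₀ hθiτi]
    have h' : α * Real.log τ < γi ((μstar - μi) / 2) * θi τi := by
      rw [div_lt_iff₀ hγiΔ] at hθiτi_gt
      linarith [hθiτi_gt]
    have : α * Real.log t ≤ α * Real.log τ := by
      exact mul_le_mul_of_nonneg_left hlogle hα.le
    linarith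
  have hx : 0 < α * Real.log t / θi τi := div_pos (mul_pos hα hlogt) hθiτi
  obtain ⟨_, hx2, hx3⟩ := hγiInv _ hx
  have hinv_lt : γiInv (α * Real.log t / θi τi) < (μstar - μi) / 2 := by
    by_contra h
    push_neg at h
    have := hγimono.monotoneOn (Set.mem_Ioi.mpr hΔ2) (Set.mem_Ioi.mpr hx3) h
    rw [hx2] at this
    linarith
  linarith
end
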